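/- arXiv:1004.2583 — 3 statements merged into one kernel-verified Lean document; each statement's English description precedes it below -/
import Mathlib

section
/- The affine maps γ1 and γ2 descend to well-defined self-maps of the real 4-torus E1' × E2' = ℂ²/(Λ1' × Λ2') (since conjugation by γ1, resp. γ2, sends the translation by (v1, v2) to the translation by (v1, −v2), resp. (−v1, v2), preserving the lattice Λ1' × Λ2'), and the induced maps of γ1 and of γ2 on E1' × E2' have no fixed points. -/
/-- The affine transformation `γ1(z1, z2) = (z1 + e1/2, −z2)` of `ℂ²`. -/
noncomputable def gammaOne (e1 : ℂ) : Equiv.Perm (ℂ × ℂ) where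
  toFun z := (z.1 + e1 / 2, -z.2)
  invFun z := (z.1 - e1 / 2, -z.2)
  left_inv z := by simp
  right_inv z := by simp

/-- The affine transformation `γ2(z1, z2) = (−z1, z2 + e2/2)` of `ℂ²`. -/
noncomputable def gammaTwo (e2 : ℂ) : Equiv.Perm (ℂ × ℂ) where
  toFun z := (-z.1, z.2 + e2 / 2)
  invFun z := (-z.1, z.2 - e2 / 2)
  left_inv z := by simp
  right_inv z := by simp

/-- The translation `t_v : z ↦ v + z` of `ℂ²`. -/
noncomputable def transl (v : ℂ × ℂ) : Equiv.Perm (ℂ × ℂ) := Equiv.addLeft v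

/-- The Keum–Naie group `Γ ≤ A(2, ℂ)` generated by `γ1, γ2` and the translations
`t_{(e1,0)}, t_{(e1',0)}, t_{(0,e2)}, t_{(0,e2')}`. -/
noncomputable def KNGamma (e1 e1' e2 e2' : ℂ) : Subgroup (Equiv.Perm (ℂ × ℂ)) :=
  Subgroup.closure {gammaOne e1, gammaTwo e2, transl (e1, 0), transl (e1', 0),
    transl (0, e2), transl (0, e2')}

lemma gammaOne_mem (e1 e1' e2 e2' : ℂ) : gammaOne e1 ∈ KNGamma e1 e1' e2 e2' :=
  Subgroup.subset_closure (by simp)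

lemma gammaTwo_mem (e1 e1' e2 e2' : ℂ) : gammaTwo e2 ∈ KNGamma e1 e1' e2 e2' :=
  Subgroup.subset_closure (by simp)

/-- The subgroup `T ≤ Γ` generated by the four translations. -/
noncomputable def KNT (e1 e1' e2 e2' : ℂ) : Subgroup (Equiv.Perm (ℂ × ℂ)) :=
  Subgroup.closure {transl (e1, 0), transl (e1', 0), transl (0, e2), transl (0, e2')}

/-- The lattice `Λ1' × Λ2' = (ℤe1 ⊕ ℤe1') × (ℤe2 ⊕ ℤe2') ⊂ ℂ²`. -/
noncomputable def KNLattice (e1 e1' e2 e2' : ℂ) : AddSubgroup (ℂ × ℂ) :=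
  AddSubgroup.closure {(e1, 0), (e1', 0), (0, e2), (0, e2')}

/-!
The linear part of `γ1` (resp. `γ2`) is `(z1, z2) ↦ (z1, -z2)` (resp. `(z1, z2) ↦ (-z1, z2)`),
which preserves the product lattice `Λ1' × Λ2'`, so the affine map descends to the torus.
A fixed point of the induced map of `γ1` would give `γ1 z - z ∈ Λ1' × Λ2'`; the first coordinate
of `γ1 z - z` is `e1 / 2`, and `e1 / 2 ∉ ℤe1 ⊕ ℤe1'` because `e1, e1'` are `ℝ`-independent.
Symmetrically for `γ2`.
-/

open QuotientAddGroup

namespace AddSubgroup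

variable {A B : Type*} [AddCommGroup A] [AddCommGroup B]

theorem closure_image_inl_union_image_inr (s : Set A) (t : Set B) :
    closure (AddMonoidHom.inl A B '' s ∪ AddMonoidHom.inr A B '' t) =
      (closure s).prod (closure t) :=
  le_antisymm
    (closure_le _ |>.2 <| Set.union_subset
      (Set.image_subset_iff.2 fun _ hx => mem_prod.2 ⟨subset_closure hx, zero_mem _⟩)
      (Set.image_subset_iff.2 fun _ hy => mem_prod.2 ⟨zero_mem _, subset_closure hy⟩))
    (prod_le_iff.2 ⟨
      map_le_iff_le_comap.2 <| closure_le _ |>.2 fun _ hx =>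
        subset_closure (Or.inl ⟨_, hx, rfl⟩),
      map_le_iff_le_comap.2 <| closure_le _ |>.2 fun _ hy =>
        subset_closure (Or.inr ⟨_, hy, rfl⟩)⟩)

theorem le_comap_neg (H : AddSubgroup A) : H ≤ H.comap (-AddMonoidHom.id A) :=
  fun _ hv => by simpa using neg_mem hv

theorem prod_le_comap_prodMap {H : AddSubgroup A} {K : AddSubgroup B} {f : A →+ A} {g : B →+ B}
    (hf : H ≤ H.comap f) (hg : K ≤ K.comap g) : H.prod K ≤ (H.prod K).comap (f.prodMap g) := by
  rw [AddMonoidHom.prodMap_comap_prod]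
  exact prod_mono hf hg

end AddSubgroup

namespace QuotientAddGroup

variable {G : Type*} [AddCommGroup G] {L : AddSubgroup G}

theorem exists_affine_descent (f : G →+ G) (hf : L ≤ L.comap f) (c : G) :
    ∃ g : G ⧸ L → G ⧸ L, ∀ z : G, g z = ↑(f z + c) :=
  ⟨fun x => map L L f hf x + c, fun _ => rfl⟩

theorem apply_ne_self_of_sub_notMem {g : G ⧸ L → G ⧸ L} {φ : G → G}
    (hg : ∀ z : G, g z = φ z) (hφ : ∀ z, φ z - z ∉ L) (x : G ⧸ L) : g x ≠ x := by
  induction x using induction_on with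
  | H z => rw [hg, Ne, eq_iff_sub_mem]; exact hφ z

end QuotientAddGroup

theorem LinearIndependent.half_smul_notMem_closure_pair {V : Type*} [AddCommGroup V] [Module ℝ V]
    {a b : V} (h : LinearIndependent ℝ ![a, b]) :
    (2⁻¹ : ℝ) • a ∉ AddSubgroup.closure ({a, b} : Set V) := by
  intro hmem
  obtain ⟨m, n, hmn⟩ := AddSubgroup.mem_closure_pair.1 hmem
  have hrel : ((m : ℝ) - 2⁻¹) • a + (n : ℝ) • b = 0 := by
    rw [sub_smul, ← hmn, Int.cast_smul_eq_zsmul, Int.cast_smul_eq_zsmul]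
    abel
  have hm : (2 * m : ℝ) = 1 := by linarith [(LinearIndependent.pair_iff.1 h _ _ hrel).1]
  norm_cast at hm
  omega

theorem KNLattice_eq_prod (e1 e1' e2 e2' : ℂ) :
    KNLattice e1 e1' e2 e2' =
      (AddSubgroup.closure {e1, e1'}).prod (AddSubgroup.closure {e2, e2'}) := by
  rw [KNLattice, ← AddSubgroup.closure_image_inl_union_image_inr]
  congr 1
  ext v
  simp [eq_comm, or_assoc]

theorem gammaOne_eq_prodMap_add (e1 : ℂ) (z : ℂ × ℂ) :
    gammaOne e1 z = (AddMonoidHom.id ℂ).prodMap (-AddMonoidHom.id ℂ) z + (e1 / 2, 0) := by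
  simp [gammaOne, Prod.ext_iff]

theorem gammaTwo_eq_prodMap_add (e2 : ℂ) (z : ℂ × ℂ) :
    gammaTwo e2 z = (-AddMonoidHom.id ℂ).prodMap (AddMonoidHom.id ℂ) z + (0, e2 / 2) := by
  simp [gammaTwo, Prod.ext_iff]

theorem gammaOne_sub_self_fst (e1 : ℂ) (z : ℂ × ℂ) : (gammaOne e1 z - z).1 = (2⁻¹ : ℝ) • e1 := by
  simp [gammaOne, Complex.real_smul]
  ring

theorem gammaTwo_sub_self_snd (e2 : ℂ) (z : ℂ × ℂ) : (gammaTwo e2 z - z).2 = (2⁻¹ : ℝ) • e2 := by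
  simp [gammaTwo, Complex.real_smul]
  ring

/-- Keum–Naie: `γ1` and `γ2` descend to well-defined self-maps of the real 4-torus
`E1' × E2' = ℂ²/(Λ1' × Λ2')`, and the induced maps have no fixed points. -/
theorem gamma_descend_to_torus_no_fixed_points
    (e1 e1' e2 e2' : ℂ)
    (h1 : LinearIndependent ℝ ![e1, e1'])
    (h2 : LinearIndependent ℝ ![e2, e2']) :
    ∃ g1 g2 : ((ℂ × ℂ) ⧸ KNLattice e1 e1' e2 e2') →
        ((ℂ × ℂ) ⧸ KNLattice e1 e1' e2 e2'),
      (∀ z : ℂ × ℂ, g1 (QuotientAddGroup.mk z) = QuotientAddGroup.mk (gammaOne e1 z)) ∧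
      (∀ z : ℂ × ℂ, g2 (QuotientAddGroup.mk z) = QuotientAddGroup.mk (gammaTwo e2 z)) ∧
      (∀ x, g1 x ≠ x) ∧ (∀ x, g2 x ≠ x) := by
  rw [KNLattice_eq_prod]
  have hid (H : AddSubgroup ℂ) : H ≤ H.comap (AddMonoidHom.id ℂ) := fun _ hv => hv
  obtain ⟨g1, hg1⟩ := exists_affine_descent _
    (AddSubgroup.prod_le_comap_prodMap (hid _) (AddSubgroup.le_comap_neg _)) ((e1 / 2, 0) : ℂ × ℂ)
  obtain ⟨g2, hg2⟩ := exists_affine_descent _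
    (AddSubgroup.prod_le_comap_prodMap (AddSubgroup.le_comap_neg _) (hid _)) ((0, e2 / 2) : ℂ × ℂ)
  have hγ1 (z : ℂ × ℂ) : g1 z = gammaOne e1 z := by rw [hg1, gammaOne_eq_prodMap_add]
  have hγ2 (z : ℂ × ℂ) : g2 z = gammaTwo e2 z := by rw [hg2, gammaTwo_eq_prodMap_add]
  refine ⟨g1, g2, hγ1, hγ2, apply_ne_self_of_sub_notMem hγ1 fun z hz => ?_,
    apply_ne_self_of_sub_notMem hγ2 fun z hz => ?_⟩
  · exact h1.half_smul_notMem_closure_pair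
      (gammaOne_sub_self_fst e1 z ▸ (AddSubgroup.mem_prod.1 hz).1)
  · exact h2.half_smul_notMem_closure_pair
      (gammaTwo_sub_self_snd e2 z ▸ (AddSubgroup.mem_prod.1 hz).2)
end

section
/- The subgroups Γ1 := ⟨γ1, t_{(e1',0)}, t_{(0,e2)}, t_{(0,e2')}⟩ and Γ2 := ⟨t_{(e1,0)}, t_{(e1',0)}, γ2, t_{(0,e2')}⟩ of Γ each have index 2 in Γ. -/
/-- The subgroup `Γ1 = ⟨γ1, t_{(e1',0)}, t_{(0,e2)}, t_{(0,e2')}⟩` of `Γ`. -/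
noncomputable def KNGammaOne (e1 e1' e2 e2' : ℂ) : Subgroup (Equiv.Perm (ℂ × ℂ)) :=
  Subgroup.closure {gammaOne e1, transl (e1', 0), transl (0, e2), transl (0, e2')}

/-- The subgroup `Γ2 = ⟨t_{(e1,0)}, t_{(e1',0)}, γ2, t_{(0,e2')}⟩` of `Γ`. -/
noncomputable def KNGammaTwo (e1 e1' e2 e2' : ℂ) : Subgroup (Equiv.Perm (ℂ × ℂ)) :=
  Subgroup.closure {transl (e1, 0), transl (e1', 0), gammaTwo e2, transl (0, e2')}

namespace Subgroup

variable {G : Type*} [Group G]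

theorem mem_normalizer_closure_of_conj_mem {T : Set G} {c : G} (hsq : c * c ∈ closure T)
    (hconj : ∀ t ∈ T, c * t * c⁻¹ ∈ closure T) : c ∈ normalizer (closure T : Set G) := by
  have hmap : ∀ h ∈ closure T, c * h * c⁻¹ ∈ closure T := by
    have : (closure T).map (MulAut.conj c).toMonoidHom ≤ closure T := by
      rw [MonoidHom.map_closure, closure_le]
      rintro _ ⟨t, ht, rfl⟩
      exact hconj t ht
    exact fun h hh => this (mem_map_of_mem _ hh)
  refine mem_normalizer_iff.mpr fun h => ⟨hmap h, fun hh => ?_⟩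
  -- since `c * c ∈ closure T`, conjugation by `c⁻¹` is conjugation by `c` up to `closure T`
  have := mul_mem (mul_mem (inv_mem hsq) (hmap _ hh)) hsq
  rwa [show (c * c)⁻¹ * (c * (c * h * c⁻¹) * c⁻¹) * (c * c) = h by group] at this

theorem mem_or_mul_mem_of_mem_zpowers_sup {H : Subgroup G} {c g : G}
    (hc : c ∈ normalizer (H : Set G)) (hsq : c * c ∈ H) (hg : g ∈ zpowers c ⊔ H) :
    g ∈ H ∨ c * g ∈ H := by
  rw [← SetLike.mem_coe, coe_mul_of_left_le_normalizer_right _ _ (zpowers_le.mpr hc)] at hg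
  obtain ⟨_, ⟨n, rfl⟩, h, hh, rfl⟩ := hg
  beta_reduce
  obtain ⟨k, rfl | rfl⟩ := Int.even_or_odd' n
  · left
    rw [show c ^ (2 * k) = (c * c) ^ k by rw [zpow_mul, zpow_two]]
    exact mul_mem (zpow_mem hsq k) hh
  · right
    rw [← mul_assoc, ← zpow_one_add, show 1 + (2 * k + 1) = 2 * (k + 1) by ring, zpow_mul,
      zpow_two]
    exact mul_mem (zpow_mem hsq _) hh

theorem subgroupOf_index_eq_two {H K : Subgroup G} {c : G} (hcK : c ∈ K) (hcH : c ∉ H)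
    (hcover : ∀ g ∈ K, g ∈ H ∨ c * g ∈ H) : (H.subgroupOf K).index = 2 := by
  refine index_eq_two_iff'.mpr ⟨⟨c, hcK⟩, fun g => ?_⟩
  simp only [mem_subgroupOf, coe_mul]
  have hnot : ¬(c * g ∈ H ∧ (g : G) ∈ H) := fun ⟨hcg, hg⟩ =>
    hcH (by simpa using mul_mem hcg (inv_mem hg))
  rcases hcover g g.2 with h | h
  · exact Or.inr ⟨h, fun h' => hnot ⟨h', h⟩⟩
  · exact Or.inl ⟨h, fun h' => hnot ⟨h, h'⟩⟩

end Subgroup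

namespace Equiv.Perm

def translationsAlong {X A : Type*} [AddGroup A] (p : X → A) : Subgroup (Perm X) where
  carrier := {g | ∀ x y, p (g x) - p (g y) = p x - p y}
  mul_mem' hg hh x y := (hg _ _).trans (hh x y)
  one_mem' _ _ := rfl
  inv_mem' {g} hg x y := by simpa using (hg (g⁻¹ x) (g⁻¹ y)).symm

end Equiv.Perm

open Subgroup Equiv.Perm

@[simp] lemma gammaOne_apply (e1 : ℂ) (z : ℂ × ℂ) : gammaOne e1 z = (z.1 + e1 / 2, -z.2) := rfl

@[simp] lemma gammaOne_symm_apply (e1 : ℂ) (z : ℂ × ℂ) :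
    (gammaOne e1).symm z = (z.1 - e1 / 2, -z.2) := rfl

@[simp] lemma gammaTwo_apply (e2 : ℂ) (z : ℂ × ℂ) : gammaTwo e2 z = (-z.1, z.2 + e2 / 2) := rfl

@[simp] lemma gammaTwo_symm_apply (e2 : ℂ) (z : ℂ × ℂ) :
    (gammaTwo e2).symm z = (-z.1, z.2 - e2 / 2) := rfl

@[simp] lemma transl_apply (v z : ℂ × ℂ) : transl v z = v + z := rfl

lemma transl_neg (v : ℂ × ℂ) : transl (-v) = (transl v)⁻¹ := Equiv.ext fun _ => rfl

lemma gammaTwo_mul_gammaTwo (e2 : ℂ) : gammaTwo e2 * gammaTwo e2 = transl (0, e2) :=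
  Equiv.ext fun z => Prod.ext (by simp) (by simp; ring)

lemma gammaOne_mul_gammaOne (e1 : ℂ) : gammaOne e1 * gammaOne e1 = transl (e1, 0) :=
  Equiv.ext fun z => Prod.ext (by simp; ring) (by simp)

lemma gammaTwo_mul_gammaOne_mul_inv (e1 e2 : ℂ) :
    gammaTwo e2 * gammaOne e1 * (gammaTwo e2)⁻¹ = transl (0, e2) * (gammaOne e1)⁻¹ :=
  Equiv.ext fun z => Prod.ext (by simp; ring) (by simp; ring)

lemma gammaTwo_mul_transl_mul_inv (e2 : ℂ) (v : ℂ × ℂ) :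
    gammaTwo e2 * transl v * (gammaTwo e2)⁻¹ = transl (-v.1, v.2) :=
  Equiv.ext fun z => Prod.ext (by simp; ring) (by simp; ring)

section GammaOne

variable {e1 e1' e2 e2' : ℂ}

lemma transl_mem_KNGammaOne {v : ℂ × ℂ}
    (hv : v = (e1', 0) ∨ v = (0, e2) ∨ v = (0, e2')) : transl v ∈ KNGammaOne e1 e1' e2 e2' :=
  subset_closure (by rcases hv with rfl | rfl | rfl <;> simp)

lemma gammaOne_mem_KNGammaOne : gammaOne e1 ∈ KNGammaOne e1 e1' e2 e2' :=
  subset_closure (by simp)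

lemma KNGammaOne_le : KNGammaOne e1 e1' e2 e2' ≤ KNGamma e1 e1' e2 e2' :=
  closure_mono (by intro x; simp; tauto)

lemma KNGammaOne_le_translationsAlong_fst :
    KNGammaOne e1 e1' e2 e2' ≤ translationsAlong Prod.fst := by
  rw [KNGammaOne, closure_le]
  rintro _ (rfl | rfl | rfl | rfl) <;> intro z w <;> simp

lemma gammaTwo_not_mem_KNGammaOne : gammaTwo e2 ∉ KNGammaOne e1 e1' e2 e2' := fun h => by
  have := KNGammaOne_le_translationsAlong_fst h (1, 0) 0
  norm_num at this

lemma gammaTwo_mul_gammaTwo_mem_KNGammaOne :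
    gammaTwo e2 * gammaTwo e2 ∈ KNGammaOne e1 e1' e2 e2' := by
  rw [gammaTwo_mul_gammaTwo]
  exact transl_mem_KNGammaOne (by simp)

lemma gammaTwo_mem_normalizer_KNGammaOne :
    gammaTwo e2 ∈ normalizer (KNGammaOne e1 e1' e2 e2' : Set _) := by
  rw [KNGammaOne]
  refine mem_normalizer_closure_of_conj_mem gammaTwo_mul_gammaTwo_mem_KNGammaOne ?_
  rintro _ (rfl | rfl | rfl | rfl) <;>
    simp only [gammaTwo_mul_gammaOne_mul_inv, gammaTwo_mul_transl_mul_inv, neg_zero]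
  · exact mul_mem (transl_mem_KNGammaOne (by simp)) (inv_mem gammaOne_mem_KNGammaOne)
  · rw [show ((-e1', 0) : ℂ × ℂ) = -(e1', 0) by simp, transl_neg]
    exact inv_mem (transl_mem_KNGammaOne (by simp))
  all_goals exact transl_mem_KNGammaOne (by simp)

lemma KNGamma_le_zpowers_gammaTwo_sup_KNGammaOne :
    KNGamma e1 e1' e2 e2' ≤ zpowers (gammaTwo e2) ⊔ KNGammaOne e1 e1' e2 e2' := by
  rw [KNGamma, closure_le]
  rintro _ (rfl | rfl | rfl | rfl | rfl | rfl)
  · exact mem_sup_right gammaOne_mem_KNGammaOne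
  · exact mem_sup_left (mem_zpowers _)
  · rw [← gammaOne_mul_gammaOne]
    exact mem_sup_right (mul_mem gammaOne_mem_KNGammaOne gammaOne_mem_KNGammaOne)
  all_goals exact mem_sup_right (transl_mem_KNGammaOne (by simp))

lemma KNGammaOne_index_eq_two :
    ((KNGammaOne e1 e1' e2 e2').subgroupOf (KNGamma e1 e1' e2 e2')).index = 2 :=
  subgroupOf_index_eq_two (gammaTwo_mem e1 e1' e2 e2') gammaTwo_not_mem_KNGammaOne fun _ hg =>
    mem_or_mul_mem_of_mem_zpowers_sup gammaTwo_mem_normalizer_KNGammaOne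
      gammaTwo_mul_gammaTwo_mem_KNGammaOne (KNGamma_le_zpowers_gammaTwo_sup_KNGammaOne hg)

end GammaOne

section CoordinateSwap

local notation "σ" => MulAut.conj (Equiv.prodComm ℂ ℂ)

lemma conj_prodComm_gammaOne (e : ℂ) : σ (gammaOne e) = gammaTwo e :=
  Equiv.ext fun _ => by simp

lemma conj_prodComm_gammaTwo (e : ℂ) : σ (gammaTwo e) = gammaOne e :=
  Equiv.ext fun _ => by simp

lemma conj_prodComm_transl (a b : ℂ) : σ (transl (a, b)) = transl (b, a) :=
  Equiv.ext fun _ => by simp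

variable (e1 e1' e2 e2' : ℂ)

lemma map_conj_prodComm_KNGammaOne :
    (KNGammaOne e2 e2' e1 e1').map (σ).toMonoidHom = KNGammaTwo e1 e1' e2 e2' := by
  rw [KNGammaOne, KNGammaTwo, MonoidHom.map_closure]
  congr 1
  simp only [Set.image_insert_eq, Set.image_singleton, MulEquiv.coe_toMonoidHom,
    conj_prodComm_gammaOne, conj_prodComm_transl]
  ext
  simp only [Set.mem_insert_iff, Set.mem_singleton_iff]
  tauto

lemma map_conj_prodComm_KNGamma :
    (KNGamma e2 e2' e1 e1').map (σ).toMonoidHom = KNGamma e1 e1' e2 e2' := by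
  rw [KNGamma, KNGamma, MonoidHom.map_closure]
  congr 1
  simp only [Set.image_insert_eq, Set.image_singleton, MulEquiv.coe_toMonoidHom,
    conj_prodComm_gammaOne, conj_prodComm_gammaTwo, conj_prodComm_transl]
  ext
  simp only [Set.mem_insert_iff, Set.mem_singleton_iff]
  tauto

end CoordinateSwap

theorem KNGammaOne_KNGammaTwo_index_two_general
    (e1 e1' e2 e2' : ℂ) :
    KNGammaOne e1 e1' e2 e2' ≤ KNGamma e1 e1' e2 e2' ∧
    ((KNGammaOne e1 e1' e2 e2').subgroupOf (KNGamma e1 e1' e2 e2')).index = 2 ∧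
    KNGammaTwo e1 e1' e2 e2' ≤ KNGamma e1 e1' e2 e2' ∧
    ((KNGammaTwo e1 e1' e2 e2').subgroupOf (KNGamma e1 e1' e2 e2')).index = 2 := by
  have hinj := (MulAut.conj (Equiv.prodComm ℂ ℂ)).injective
  refine ⟨KNGammaOne_le, KNGammaOne_index_eq_two, ?_, ?_⟩
  · rw [← map_conj_prodComm_KNGammaOne, ← map_conj_prodComm_KNGamma]
    exact map_mono KNGammaOne_le
  · rw [← map_conj_prodComm_KNGammaOne, ← map_conj_prodComm_KNGamma, ← relIndex,
      relIndex_map_map_of_injective _ _ hinj]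
    exact KNGammaOne_index_eq_two

/-- Keum–Naie: the subgroups `Γ1 = ⟨γ1, e1', e2, e2'⟩` and `Γ2 = ⟨e1, e1', γ2, e2'⟩`
of `Γ` each have index 2 in `Γ`. -/
theorem KNGammaOne_KNGammaTwo_index_two
    (e1 e1' e2 e2' : ℂ)
    (h1 : LinearIndependent ℝ ![e1, e1'])
    (h2 : LinearIndependent ℝ ![e2, e2']) :
    KNGammaOne e1 e1' e2 e2' ≤ KNGamma e1 e1' e2 e2' ∧
    ((KNGammaOne e1 e1' e2 e2').subgroupOf (KNGamma e1 e1' e2 e2')).index = 2 ∧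
    KNGammaTwo e1 e1' e2 e2' ≤ KNGamma e1 e1' e2 e2' ∧
    ((KNGammaTwo e1 e1' e2 e2').subgroupOf (KNGamma e1 e1' e2 e2')).index = 2 :=
  KNGammaOne_KNGammaTwo_index_two_general e1 e1' e2 e2'
end

section
/- In the projective special linear group PSL(2, 𝔽7) (of order 168) there exist elements x, y, z with orders 2, 3, 7 respectively such that x y z = 1 and ⟨x, y, z⟩ = PSL(2, 𝔽7), and there exist elements u, v, w, each of order 4, such that u v w = 1 and ⟨u, v, w⟩ = PSL(2, 𝔽7). -/
/-!
An element `g ∈ SL(2, K)` with `g₁₀ ≠ 0` factors as an upper, a lower and an upper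
elementary transvection, so the elementary transvections generate `SL(2, K)` over a field,
and over `𝔽_p` the two transvections with entry `1` already do. For both generating systems
we take lifts to `SL(2, 𝔽₇)` in which these two transvections are words of length two.
Over a domain the center of `SL(2, R)` is `{±1}`, so orders in the quotient are read off
from `g ^ n = ±1`.
-/

/-- `PSL(2, 𝔽7)`: the quotient of `SL(2, ℤ/7)` by its center. -/
abbrev PSL₂F₇ : Type :=
  Matrix.SpecialLinearGroup (Fin 2) (ZMod 7) ⧸
    Subgroup.center (Matrix.SpecialLinearGroup (Fin 2) (ZMod 7))

open Matrix Subgroup MatrixGroups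

namespace Matrix.SpecialLinearGroup

variable {R : Type*} [CommRing R]

theorem coe_transvection_zero_one (b : R) :
    ((transvection zero_ne_one b : SL(2, R)) : Matrix (Fin 2) (Fin 2) R) = !![1, b; 0, 1] := by
  ext i j; fin_cases i <;> fin_cases j <;> simp [transvection_coe]

theorem coe_transvection_one_zero (b : R) :
    ((transvection one_ne_zero b : SL(2, R)) : Matrix (Fin 2) (Fin 2) R) = !![1, 0; b, 1] := by
  ext i j; fin_cases i <;> fin_cases j <;> simp [transvection_coe]

theorem transvection_natCast {i j : Fin 2} (hij : i ≠ j) (n : ℕ) :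
    transvection hij (n : R) = transvection hij 1 ^ n := by
  induction n with
  | zero => simp
  | succ n ih => rw [Nat.cast_succ, transvection_add, ih, pow_succ]

section Field

variable {K : Type*} [Field K]

theorem eq_transvection_mul_transvection_mul_transvection (g : SL(2, K)) (hc : g 1 0 ≠ 0) :
    g = transvection zero_ne_one ((g 0 0 - 1) / g 1 0) * transvection one_ne_zero (g 1 0) *
      transvection zero_ne_one ((g 1 1 - 1) / g 1 0) := by
  have hdet : g 0 0 * g 1 1 - g 0 1 * g 1 0 = 1 := by rw [← det_fin_two]; exact g.2
  refine Subtype.ext ((eta_fin_two _).trans ?_)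
  rw [coe_mul, coe_mul, coe_transvection_zero_one, coe_transvection_one_zero,
    coe_transvection_zero_one, mul_fin_two, mul_fin_two]
  simp only [EmbeddingLike.apply_eq_iff_eq, vecCons_inj, and_true]
  refine ⟨⟨?_, ?_⟩, ?_, ?_⟩ <;> field_simp
  · ring
  · linear_combination -hdet
  · ring
  · ring

theorem eq_top_of_forall_transvection_mem {H : Subgroup SL(2, K)}
    (hu : ∀ b, transvection zero_ne_one b ∈ H) (hl : ∀ b, transvection one_ne_zero b ∈ H) :
    H = ⊤ := by
  have mem_of_ne_zero (g : SL(2, K)) (hc : g 1 0 ≠ 0) : g ∈ H := by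
    rw [eq_transvection_mul_transvection_mul_transvection g hc]
    exact mul_mem (mul_mem (hu _) (hl _)) (hu _)
  refine eq_top_iff.2 fun g _ => ?_
  by_cases hc : g 1 0 = 0
  · have ha : g 0 0 ≠ 0 := by
      have hdet : g 0 0 * g 1 1 - g 0 1 * g 1 0 = 1 := by rw [← det_fin_two]; exact g.2
      rintro h
      simp [h, hc] at hdet
    have hlg : (transvection one_ne_zero 1 * g : SL(2, K)) 1 0 ≠ 0 := by
      simpa [transvection_coe, mul_apply, Fin.sum_univ_two, hc] using ha
    simpa using H.mul_mem (H.inv_mem (hl 1)) (mem_of_ne_zero _ hlg)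
  · exact mem_of_ne_zero g hc

theorem eq_top_of_transvection_one_mem {p : ℕ} [Fact p.Prime] {H : Subgroup SL(2, ZMod p)}
    (hu : transvection zero_ne_one 1 ∈ H) (hl : transvection one_ne_zero 1 ∈ H) : H = ⊤ := by
  refine eq_top_of_forall_transvection_mem (fun b => ?_) (fun b => ?_) <;>
    rw [← ZMod.natCast_zmod_val b, transvection_natCast]
  exacts [pow_mem hu _, pow_mem hl _]

end Field

section NoZeroDivisors

variable [NoZeroDivisors R]

theorem mem_center_iff_fin_two {g : SL(2, R)} :
    g ∈ center SL(2, R) ↔ g = 1 ∨ g = -1 := by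
  have hneg : scalar (Fin 2) (-1 : R) = ((-1 : SL(2, R)) : Matrix (Fin 2) (Fin 2) R) := by
    rw [coe_neg, coe_one, map_neg, map_one]
  rw [mem_center_iff, Fintype.card_fin]
  constructor
  · rintro ⟨r, hr, hg⟩
    rcases sq_eq_one_iff.1 hr with rfl | rfl
    · exact .inl (Subtype.ext (by rw [← hg, map_one, coe_one]))
    · exact .inr (Subtype.ext (by rw [← hg, hneg]))
  · rintro (rfl | rfl)
    · exact ⟨1, one_pow _, by rw [map_one, coe_one]⟩
    · exact ⟨-1, by norm_num, hneg⟩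

theorem mk_eq_one_iff_fin_two (g : SL(2, R)) :
    (g : SL(2, R) ⧸ center SL(2, R)) = 1 ↔ g = 1 ∨ g = -1 := by
  rw [QuotientGroup.eq_one_iff, mem_center_iff_fin_two]

theorem orderOf_mk_eq_prime {p : ℕ} [Fact p.Prime] {g : SL(2, R)}
    (hp : g ^ p = 1 ∨ g ^ p = -1) (h1 : ¬(g = 1 ∨ g = -1)) :
    orderOf (g : SL(2, R) ⧸ center SL(2, R)) = p :=
  orderOf_eq_prime (by rwa [← QuotientGroup.mk_pow, mk_eq_one_iff_fin_two])
    (by rwa [Ne, mk_eq_one_iff_fin_two])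

theorem orderOf_mk_eq_prime_pow {p n : ℕ} [Fact p.Prime] {g : SL(2, R)}
    (hn : ¬(g ^ p ^ n = 1 ∨ g ^ p ^ n = -1))
    (hn1 : g ^ p ^ (n + 1) = 1 ∨ g ^ p ^ (n + 1) = -1) :
    orderOf (g : SL(2, R) ⧸ center SL(2, R)) = p ^ (n + 1) :=
  orderOf_eq_prime_pow (by rwa [← QuotientGroup.mk_pow, mk_eq_one_iff_fin_two])
    (by rwa [← QuotientGroup.mk_pow, mk_eq_one_iff_fin_two])

end NoZeroDivisors

end Matrix.SpecialLinearGroup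

theorem QuotientGroup.closure_mk_eq_top {G : Type*} [Group G] {N : Subgroup G} [N.Normal]
    {a b c : G} (h : Subgroup.closure {a, b, c} = ⊤) :
    Subgroup.closure {(a : G ⧸ N), (b : G ⧸ N), (c : G ⧸ N)} = ⊤ := by
  have := congrArg (Subgroup.map (QuotientGroup.mk' N)) h
  rwa [MonoidHom.map_closure, map_top_of_surjective _ (QuotientGroup.mk'_surjective N),
    Set.image_insert_eq, Set.image_pair] at this

instance Nat.fact_prime_seven : Fact (Nat.Prime 7) := ⟨Nat.prime_seven⟩

namespace PSL₂F₇

open Matrix.SpecialLinearGroup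

def x : SL(2, ZMod 7) := ⟨!![0, -1; 1, 0], by decide⟩
def y : SL(2, ZMod 7) := ⟨!![0, 1; -1, 1], by decide⟩
def z : SL(2, ZMod 7) := transvection zero_ne_one 1

def u : SL(2, ZMod 7) := ⟨!![0, 1; -1, 3], by decide⟩
def v : SL(2, ZMod 7) := ⟨!![0, 1; -1, 4], by decide⟩
def w : SL(2, ZMod 7) := ⟨!![4, 3; 3, -1], by decide⟩

theorem closure_xyz : Subgroup.closure {x, y, z} = ⊤ := by
  refine eq_top_of_transvection_one_mem (subset_closure (by simp [z])) ?_
  rw [show transvection one_ne_zero 1 = y * x by decide]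
  exact mul_mem (subset_closure (by simp)) (subset_closure (by simp))

theorem closure_uvw : Subgroup.closure {u, v, w} = ⊤ := by
  have hu : u ∈ Subgroup.closure {u, v, w} := subset_closure (by simp)
  have hv : v ∈ Subgroup.closure {u, v, w} := subset_closure (by simp)
  refine eq_top_of_transvection_one_mem ?_ ?_
  · rw [show transvection zero_ne_one 1 = v⁻¹ * u by decide]
    exact mul_mem (inv_mem hv) hu
  · rw [show transvection one_ne_zero 1 = v * u⁻¹ by decide]
    exact mul_mem hv (inv_mem hu)

end PSL₂F₇

open PSL₂F₇ Matrix.SpecialLinearGroup in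
/-- In `PSL(2, 𝔽7)` there is a system of generators of signature `(0; 2, 3, 7)`:
elements `x, y, z` of orders `2, 3, 7` with `x y z = 1` generating the group; and a
system of generators of signature `(0; 4, 4, 4)`: elements `u, v, w` of order `4`
with `u v w = 1` generating the group. -/
theorem psl_two_seven_generators_237_and_444 :
    (∃ x y z : PSL₂F₇,
      orderOf x = 2 ∧ orderOf y = 3 ∧ orderOf z = 7 ∧
      x * y * z = 1 ∧ Subgroup.closure {x, y, z} = ⊤) ∧
    (∃ u v w : PSL₂F₇,
      orderOf u = 4 ∧ orderOf v = 4 ∧ orderOf w = 4 ∧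
      u * v * w = 1 ∧ Subgroup.closure {u, v, w} = ⊤) := by
  have mk_mul_mul_eq_one {a b c : SL(2, ZMod 7)} (h : a * b * c = 1) :
      (a : PSL₂F₇) * b * c = 1 := by
    rw [← QuotientGroup.mk_mul, ← QuotientGroup.mk_mul, h, QuotientGroup.mk_one]
  refine ⟨⟨x, y, z, ?_, ?_, ?_, mk_mul_mul_eq_one (by decide),
      QuotientGroup.closure_mk_eq_top closure_xyz⟩,
    ⟨u, v, w, ?_, ?_, ?_, mk_mul_mul_eq_one (by decide),
      QuotientGroup.closure_mk_eq_top closure_uvw⟩⟩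
  iterate 3 exact orderOf_mk_eq_prime (by decide) (by decide)
  iterate 3 exact orderOf_mk_eq_prime_pow (p := 2) (n := 1) (by decide) (by decide)
end
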